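/- (Axiom BN2 for GL_n) Let k be a field, n ≥ 2, let σ_i ∈ S_n be the adjacent transposition (i, i+1) for some 1 ≤ i ≤ n−1, and let π ∈ S_n be any permutation. Then the product of double cosets in GL_n(k) satisfies (B a_{σ_i} B) · (B a_π B) ⊆ (B a_π B) ∪ (B a_{σ_i π} B), where the product of two double cosets is the set of all products of an element of the first with an element of the second. -/

import Mathlib

/-- The set `B` of invertible upper triangular `n × n` matrices over `k`. -/
def upperTriangularUnits (k : Type*) [Field k] (n : ℕ) : Set (Matrix (Fin n) (Fin n) k) :=
  {b | IsUnit b.det ∧ ∀ i j : Fin n, j < i → b i j = 0}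

/-- The permutation matrix `a_π`, with `(a_π)_{ij} = 1` iff `i = π j`. -/
def permMat (k : Type*) [Field k] {n : ℕ} (π : Equiv.Perm (Fin n)) :
    Matrix (Fin n) (Fin n) k :=
  Matrix.of fun i j => if i = π j then 1 else 0

/-- The double coset `B a_π B` in `GL_n(k)`. -/
def doubleCoset (k : Type*) [Field k] {n : ℕ} (π : Equiv.Perm (Fin n)) :
    Set (Matrix (Fin n) (Fin n) k) :=
  {x | ∃ b ∈ upperTriangularUnits k n, ∃ b' ∈ upperTriangularUnits k n,
    x = b * permMat k π * b'}

/-!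
Write the product as `b₁ a_σ d a_π c₂` with `d ∈ B`, and clear the `(i, i+1)` entry of `d` by a
column operation: `d = d₁ (1 + t E_{i,i+1})` with `d₁ ∈ B` and `(d₁)_{i,i+1} = 0`. Because `i + 1`
covers `i`, this is the only entry that conjugation by `a_σ` moves below the diagonal, so
`a_σ d₁ a_σ ∈ B` and everything reduces to `a_σ (1 + t E_{i,i+1}) a_π`. If `t = 0` or
`π⁻¹ i < π⁻¹ (i+1)`, the transvection passes through `a_π` as an upper one, landing in `B a_{σπ} B`.
Otherwise the `2 × 2` identity `[[0,1],[1,t]] = [[-t⁻¹,1],[0,t]] [[1,0],[t⁻¹,1]]` rewrites it as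
`q (1 + t⁻¹ E_{i+1,i}) a_π` with `q ∈ B`, and this lower transvection passes through `a_π` as an
upper one, landing in `B a_π B`.
-/

open Matrix

section

variable {k : Type*} [Field k] {n : ℕ}

theorem swap_apply_lt_swap_apply_of_covBy {i j r s : Fin n} (hij : i ⋖ j) (hsr : s < r) :
    Equiv.swap i j s < Equiv.swap i j r ∨ s = i ∧ r = j := by
  rw [Fin.covBy_iff, Nat.covBy_iff_add_one_eq] at hij
  rw [Equiv.swap_apply_def, Equiv.swap_apply_def]
  simp only [Fin.lt_def, Fin.ext_iff] at hsr ⊢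
  split_ifs <;> omega

theorem mem_upperTriangularUnits_iff {M : Matrix (Fin n) (Fin n) k} :
    M ∈ upperTriangularUnits k n ↔ M.IsUpperTriangular ∧ ∀ a, M a a ≠ 0 := by
  refine and_comm.trans (and_congr_right fun hM => ?_)
  rw [det_of_isUpperTriangular hM, isUnit_iff_ne_zero, Finset.prod_ne_zero_iff]
  simp

theorem one_mem_upperTriangularUnits :
    (1 : Matrix (Fin n) (Fin n) k) ∈ upperTriangularUnits k n :=
  mem_upperTriangularUnits_iff.2 ⟨blockTriangular_one, fun _ => by simp⟩

theorem mul_mem_upperTriangularUnits {b c : Matrix (Fin n) (Fin n) k}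
    (hb : b ∈ upperTriangularUnits k n) (hc : c ∈ upperTriangularUnits k n) :
    b * c ∈ upperTriangularUnits k n :=
  ⟨(det_mul b c).symm ▸ hb.1.mul hc.1, BlockTriangular.mul (b := id) hb.2 hc.2⟩

theorem transvection_mem_upperTriangularUnits {a b : Fin n} (hab : a < b) (c : k) :
    transvection a b c ∈ upperTriangularUnits k n :=
  mem_upperTriangularUnits_iff.2
    ⟨blockTriangular_transvection hab.le c, fun x => by
      have : ¬(a = x ∧ b = x) := fun h => hab.ne (h.1.trans h.2.symm)
      simp [transvection, this]⟩

theorem submatrix_swap_mem_upperTriangularUnits {i j : Fin n} (hij : i ⋖ j)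
    {d : Matrix (Fin n) (Fin n) k} (hd : d ∈ upperTriangularUnits k n) (hdij : d i j = 0) :
    d.submatrix (Equiv.swap i j) (Equiv.swap i j) ∈ upperTriangularUnits k n := by
  rw [mem_upperTriangularUnits_iff] at hd ⊢
  refine ⟨fun r s hsr => ?_, fun a => hd.2 _⟩
  obtain hlt | ⟨rfl, rfl⟩ := swap_apply_lt_swap_apply_of_covBy hij hsr
  · exact hd.1 hlt
  · simpa using hdij

theorem exists_eq_mul_transvection {d : Matrix (Fin n) (Fin n) k}
    (hd : d ∈ upperTriangularUnits k n) {i j : Fin n} (hij : i < j) :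
    ∃ d₁ ∈ upperTriangularUnits k n, d₁ i j = 0 ∧ ∃ t : k, d = d₁ * transvection i j t := by
  set t := d i j / d i i
  refine ⟨d * transvection i j (-t),
    mul_mem_upperTriangularUnits hd (transvection_mem_upperTriangularUnits hij _), ?_, t, ?_⟩
  · have hii : d i i ≠ 0 := (mem_upperTriangularUnits_iff.1 hd).2 i
    rw [mul_transvection_apply_same, neg_mul, div_mul_cancel₀ _ hii, add_neg_cancel]
  · rw [mul_assoc, transvection_mul_transvection_same _ _ hij.ne, neg_add_cancel,
      transvection_zero, mul_one]

theorem permMat_eq_permMatrix (π : Equiv.Perm (Fin n)) : permMat k π = π⁻¹.permMatrix k := by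
  ext a b
  simp [permMat, Equiv.Perm.permMatrix, PEquiv.toMatrix_apply, Equiv.Perm.inv_def,
    Equiv.eq_symm_apply, eq_comm]

theorem permMat_mul_permMat (σ π : Equiv.Perm (Fin n)) :
    permMat k σ * permMat k π = permMat k (σ * π) := by
  simp only [permMat_eq_permMatrix, _root_.mul_inv_rev, permMatrix_mul]

theorem permMat_swap_mul_self (a b : Fin n) :
    permMat k (Equiv.swap a b) * permMat k (Equiv.swap a b) = 1 := by
  rw [permMat_mul_permMat, Equiv.swap_mul_self, permMat_eq_permMatrix, inv_one, permMatrix_one]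

theorem permMat_mul (π : Equiv.Perm (Fin n)) (M : Matrix (Fin n) (Fin n) k) :
    permMat k π * M = M.submatrix ⇑π⁻¹ id := by
  rw [permMat_eq_permMatrix, Equiv.Perm.permMatrix, PEquiv.toMatrix_toPEquiv_mul]

theorem mul_permMat (π : Equiv.Perm (Fin n)) (M : Matrix (Fin n) (Fin n) k) :
    M * permMat k π = M.submatrix id π := by
  rw [permMat_eq_permMatrix, Equiv.Perm.permMatrix, PEquiv.mul_toMatrix_toPEquiv]
  rfl

theorem transvection_mul_permMat (π : Equiv.Perm (Fin n)) (a b : Fin n) (c : k) :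
    transvection a b c * permMat k π = permMat k π * transvection (π⁻¹ a) (π⁻¹ b) c := by
  ext r s
  simp [mul_permMat, permMat_mul, transvection, one_apply, single_apply, Equiv.Perm.inv_def,
    Equiv.symm_apply_eq, Equiv.eq_symm_apply]

theorem permMat_swap_mul_transvection {i j : Fin n} (hij : i < j) {t : k} (ht : t ≠ 0) :
    ∃ q ∈ upperTriangularUnits k n,
      permMat k (Equiv.swap i j) * transvection i j t = q * transvection j i t⁻¹ := by
  refine ⟨permMat k (Equiv.swap i j) * transvection i j t * transvection j i (-t⁻¹), ?_, ?_⟩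
  · have hP : transvection i j t * transvection j i (-t⁻¹)
        = 1 + single i j t + single j i (-t⁻¹) + single i i (-1) := by
      simp only [transvection, Matrix.mul_add, mul_one, Matrix.add_mul, one_mul,
        single_mul_single_same, mul_neg, ne_eq, ht, not_false_eq_true, mul_inv_cancel₀]
      abel
    rw [mul_assoc, permMat_mul, hP, Equiv.swap_inv, mem_upperTriangularUnits_iff]
    refine ⟨fun r s hsr => ?_, fun r => ?_⟩
    · rw [submatrix_apply, Equiv.swap_apply_def]
      split_ifs <;> subst_vars <;> simp [one_apply, single_apply] <;> grind
    · rw [submatrix_apply, Equiv.swap_apply_def]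
      split_ifs <;> subst_vars <;> simp [one_apply, single_apply] <;> grind
  · rw [mul_assoc _ (transvection j i _), transvection_mul_transvection_same _ _ hij.ne',
      neg_add_cancel, transvection_zero, mul_one]

theorem permMat_mem_doubleCoset (π : Equiv.Perm (Fin n)) : permMat k π ∈ doubleCoset k π :=
  ⟨1, one_mem_upperTriangularUnits, 1, one_mem_upperTriangularUnits, by simp⟩

theorem mul_mem_doubleCoset_left {π : Equiv.Perm (Fin n)} {b x : Matrix (Fin n) (Fin n) k}
    (hb : b ∈ upperTriangularUnits k n) (hx : x ∈ doubleCoset k π) : b * x ∈ doubleCoset k π := by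
  obtain ⟨c, hc, c', hc', rfl⟩ := hx
  exact ⟨b * c, mul_mem_upperTriangularUnits hb hc, c', hc', by simp only [mul_assoc]⟩

theorem mul_mem_doubleCoset_right {π : Equiv.Perm (Fin n)} {x b : Matrix (Fin n) (Fin n) k}
    (hx : x ∈ doubleCoset k π) (hb : b ∈ upperTriangularUnits k n) : x * b ∈ doubleCoset k π := by
  obtain ⟨c, hc, c', hc', rfl⟩ := hx
  exact ⟨c, hc, c' * b, mul_mem_upperTriangularUnits hc' hb, by simp only [mul_assoc]⟩

theorem permMat_swap_mul_transvection_mul_permMat_mem {i j : Fin n} (hij : i < j) (t : k)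
    (π : Equiv.Perm (Fin n)) :
    permMat k (Equiv.swap i j) * transvection i j t * permMat k π ∈
      doubleCoset k π ∪ doubleCoset k (Equiv.swap i j * π) := by
  rcases eq_or_ne t 0 with rfl | ht
  · rw [transvection_zero, mul_one, permMat_mul_permMat]
    exact Or.inr (permMat_mem_doubleCoset _)
  rcases lt_or_gt_of_ne (π⁻¹.injective.ne hij.ne) with hπ | hπ
  · refine Or.inr ⟨1, one_mem_upperTriangularUnits, _,
      transvection_mem_upperTriangularUnits hπ t, ?_⟩
    rw [mul_assoc, transvection_mul_permMat, ← mul_assoc, permMat_mul_permMat, one_mul]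
  · obtain ⟨q, hq, hfactor⟩ := permMat_swap_mul_transvection hij ht
    refine Or.inl ⟨q, hq, _, transvection_mem_upperTriangularUnits hπ t⁻¹, ?_⟩
    rw [hfactor, mul_assoc, transvection_mul_permMat, mul_assoc]

theorem permMat_swap_mul_mul_permMat_mem {i j : Fin n} (hij : i ⋖ j)
    {d : Matrix (Fin n) (Fin n) k} (hd : d ∈ upperTriangularUnits k n) (π : Equiv.Perm (Fin n)) :
    permMat k (Equiv.swap i j) * d * permMat k π ∈
      doubleCoset k π ∪ doubleCoset k (Equiv.swap i j * π) := by
  obtain ⟨d₁, hd₁, hd₁ij, t, rfl⟩ := exists_eq_mul_transvection hd hij.lt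
  have hconj : permMat k (Equiv.swap i j) * d₁ * permMat k (Equiv.swap i j)
      = d₁.submatrix (Equiv.swap i j) (Equiv.swap i j) := by
    rw [permMat_mul, mul_permMat, submatrix_submatrix, Equiv.swap_inv]
    rfl
  have hsplit : permMat k (Equiv.swap i j) * (d₁ * transvection i j t) * permMat k π
      = d₁.submatrix (Equiv.swap i j) (Equiv.swap i j) *
          (permMat k (Equiv.swap i j) * transvection i j t * permMat k π) := by
    rw [← hconj]
    simp only [mul_assoc]
    rw [← mul_assoc (permMat k _) (permMat k _), permMat_swap_mul_self, one_mul]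
  have he := submatrix_swap_mem_upperTriangularUnits hij hd₁ hd₁ij
  rw [hsplit]
  exact (permMat_swap_mul_transvection_mul_permMat_mem hij.lt t π).imp
    (mul_mem_doubleCoset_left he) (mul_mem_doubleCoset_left he)

end

theorem stmt_6_general (k : Type*) [Field k] (n : ℕ)
    (i : Fin n) (hi : (i : ℕ) + 1 < n) (π : Equiv.Perm (Fin n)) :
    ∀ x ∈ doubleCoset k (Equiv.swap i ⟨(i : ℕ) + 1, hi⟩),
      ∀ y ∈ doubleCoset k π,
        x * y ∈ doubleCoset k π ∪ doubleCoset k (Equiv.swap i ⟨(i : ℕ) + 1, hi⟩ * π) := by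
  rintro _ ⟨b₁, hb₁, b₂, hb₂, rfl⟩ _ ⟨c₁, hc₁, c₂, hc₂, rfl⟩
  set j : Fin n := ⟨(i : ℕ) + 1, hi⟩
  have hij : i ⋖ j := Fin.covBy_iff.2 (Nat.covBy_iff_add_one_eq.2 rfl)
  have hmiddle := permMat_swap_mul_mul_permMat_mem hij (mul_mem_upperTriangularUnits hb₂ hc₁) π
  have hassoc : b₁ * permMat k (Equiv.swap i j) * b₂ * (c₁ * permMat k π * c₂)
      = b₁ * (permMat k (Equiv.swap i j) * (b₂ * c₁) * permMat k π) * c₂ := by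
    simp only [mul_assoc]
  rw [hassoc]
  exact hmiddle.imp (fun h => mul_mem_doubleCoset_right (mul_mem_doubleCoset_left hb₁ h) hc₂)
    (fun h => mul_mem_doubleCoset_right (mul_mem_doubleCoset_left hb₁ h) hc₂)

/-- (Axiom BN2 for `GL_n`) If `σ = (i, i+1)` is an adjacent transposition and `π ∈ S_n`
is any permutation, then `(B a_σ B) · (B a_π B) ⊆ (B a_π B) ∪ (B a_{σπ} B)`. -/
theorem stmt_6 (k : Type*) [Field k] (n : ℕ) (hn : 2 ≤ n)
    (i : Fin n) (hi : (i : ℕ) + 1 < n) (π : Equiv.Perm (Fin n)) :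
    ∀ x ∈ doubleCoset k (Equiv.swap i ⟨(i : ℕ) + 1, hi⟩),
      ∀ y ∈ doubleCoset k π,
        x * y ∈ doubleCoset k π ∪ doubleCoset k (Equiv.swap i ⟨(i : ℕ) + 1, hi⟩ * π) :=
  stmt_6_general k n i hi π
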